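/- Let (x_k) be the iterates of the randomized Kaczmarz method with mismatched adjoint for a consistent system A x̂ = b, with indices i_k chosen i.i.d. with probabilities pᵢ. If λ := λ_min(VᵀDA + AᵀDV − AᵀSDA) > 0 then for all k, E[‖x_{k+1} − x̂‖²] ≤ (1 − λ)·E[‖x_k − x̂‖²], and hence E[‖x_k − x̂‖²] ≤ (1 − λ)^k·‖x_0 − x̂‖². -/

import Mathlib

open Matrix Finset

noncomputable def enorm' {n : ℕ} (v : Fin n → ℝ) : ℝ := Real.sqrt (v ⬝ᵥ v)

/-- Iterates of the randomized Kaczmarz method with mismatched adjoint along a given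
sequence of chosen row indices `ω`. -/
noncomputable def rkmaIter {m n : ℕ} (A V : Matrix (Fin m) (Fin n) ℝ) (b : Fin m → ℝ)
    (x0 : Fin n → ℝ) : (k : ℕ) → (Fin k → Fin m) → (Fin n → ℝ)
  | 0, _ => x0
  | k + 1, ω =>
      let x := rkmaIter A V b x0 k (fun j => ω j.castSucc)
      let i := ω (Fin.last k)
      x - ((A i ⬝ᵥ x - b i) / (A i ⬝ᵥ V i)) • V i

/-! The expected squared error after a step with random row `i`, given the current error `e`, is
`∑ᵢ pᵢ ‖e - (⟨aᵢ, e⟩ / ⟨aᵢ, vᵢ⟩) vᵢ‖²`; expanding the square turns it into `‖e‖² - eᵀ M e` with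
`M = VᵀDA + AᵀDV - AᵀSDA`, and the Rayleigh bound `eᵀ M e ≥ λ ‖e‖²` gives the one-step contraction.
Since the indices are independent, averaging over the last index first transfers this bound to the
full expectation, and iterating gives the rate. The left side being nonnegative forces `λ ≤ 1`, so
the contraction factor `1 - λ` is nonnegative and the iteration is legitimate. -/

theorem Matrix.IsHermitian.iInf_eigenvalues_mul_dotProduct_self_le {n : Type*} [Fintype n]
    [DecidableEq n] {M : Matrix n n ℝ} (hM : M.IsHermitian) (x : n → ℝ) :
    (⨅ j, hM.eigenvalues j) * (x ⬝ᵥ x) ≤ x ⬝ᵥ M *ᵥ x := by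
  set U : Matrix n n ℝ := (hM.eigenvectorUnitary : Matrix n n ℝ)
  obtain ⟨y, hy⟩ : ∃ y, y = star U *ᵥ x := ⟨_, rfl⟩
  have hxU : x ᵥ* U = y := by
    rw [hy, star_eq_conjTranspose, conjTranspose_eq_transpose_of_trivial, mulVec_transpose]
  have hquad : x ⬝ᵥ M *ᵥ x = ∑ j, hM.eigenvalues j * y j ^ 2 := by
    conv_lhs => rw [hM.spectral_theorem, Unitary.conjStarAlgAut_apply]
    rw [← mulVec_mulVec, ← mulVec_mulVec, dotProduct_mulVec, hxU, ← hy]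
    simp only [dotProduct, mulVec_diagonal, Function.comp_apply, RCLike.ofReal_real_eq_id, id]
    exact sum_congr rfl fun j _ => by ring
  have hnorm : x ⬝ᵥ x = ∑ j, y j ^ 2 := by
    have hU : U * star U = 1 := Unitary.mul_star_self_of_mem hM.eigenvectorUnitary.2
    calc x ⬝ᵥ x = x ⬝ᵥ (U * star U) *ᵥ x := by rw [hU, one_mulVec]
      _ = ∑ j, y j ^ 2 := by
        rw [← mulVec_mulVec, dotProduct_mulVec, hxU, ← hy]; simp only [dotProduct, sq]
  rw [hquad, hnorm, mul_sum]
  gcongr with j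
  exact ciInf_le (Set.finite_range _).bddBelow j

theorem Matrix.dotProduct_transpose_mul_diagonal_mul_mulVec {R m n : Type*} [CommSemiring R]
    [Fintype m] [Fintype n] [DecidableEq m] (B C : Matrix m n R) (d : m → R) (x y : n → R) :
    x ⬝ᵥ (Bᵀ * diagonal d * C) *ᵥ y = ∑ i, d i * (B i ⬝ᵥ x) * (C i ⬝ᵥ y) := by
  rw [Matrix.mul_assoc, ← mulVec_mulVec, dotProduct_mulVec, vecMul_transpose, ← mulVec_mulVec]
  simp only [dotProduct, mulVec_diagonal]
  simp only [dotProduct, mulVec]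
  exact sum_congr rfl fun i _ => by ring

theorem Finset.sum_prod_mul_le_mul_sum_of_sum_snoc_le {α : Type*} [Fintype α] {k : ℕ}
    (p : α → ℝ) (hp : ∀ a, 0 ≤ p a) (f : (Fin (k + 1) → α) → ℝ) (g : (Fin k → α) → ℝ) (c : ℝ)
    (h : ∀ ω, ∑ a, p a * f (Fin.snoc ω a) ≤ c * g ω) :
    ∑ ω, (∏ j, p (ω j)) * f ω ≤ c * ∑ ω, (∏ j, p (ω j)) * g ω := by
  rw [← (Fin.snocEquiv fun _ => α).sum_comp, Fintype.sum_prod_type, sum_comm, mul_sum]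
  refine sum_le_sum fun ω _ => ?_
  have hprod : ∀ a, ∏ j, p (Fin.snoc ω a j) = (∏ j, p (ω j)) * p a := fun a => by
    simp only [Fin.prod_univ_castSucc, Fin.snoc_castSucc, Fin.snoc_last]
  calc ∑ a, (∏ j, p (Fin.snoc ω a j)) * f (Fin.snoc ω a)
      = (∏ j, p (ω j)) * ∑ a, p a * f (Fin.snoc ω a) := by simp only [hprod, mul_sum, mul_assoc]
    _ ≤ (∏ j, p (ω j)) * (c * g ω) := by gcongr; exacts [prod_nonneg fun j _ => hp _, h ω]
    _ = c * ((∏ j, p (ω j)) * g ω) := by ring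

theorem enorm'_sq {n : ℕ} (v : Fin n → ℝ) : enorm' v ^ 2 = v ⬝ᵥ v :=
  Real.sq_sqrt (dotProduct_star_self_nonneg v)

section Kaczmarz

variable {m n : Type*} [Fintype m] [Fintype n] [DecidableEq m]

/-- A step of the method with row `i` maps the error `x - xhat` to `obliqueProj A V i (x - xhat)`. -/
noncomputable def obliqueProj (A V : Matrix m n ℝ) (i : m) (e : n → ℝ) : n → ℝ :=
  e - (A i ⬝ᵥ e / (A i ⬝ᵥ V i)) • V i

theorem sum_mul_dotProduct_self_obliqueProj (A V : Matrix m n ℝ) (p : m → ℝ)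
    (hps : ∑ i, p i = 1) {D S : Matrix m m ℝ} (hD : D = diagonal fun i => p i / (A i ⬝ᵥ V i))
    (hS : S = diagonal fun i => V i ⬝ᵥ V i / (A i ⬝ᵥ V i)) (e : n → ℝ) :
    ∑ i, p i * (obliqueProj A V i e ⬝ᵥ obliqueProj A V i e) =
      e ⬝ᵥ e - e ⬝ᵥ (Vᵀ * D * A + Aᵀ * D * V - Aᵀ * S * D * A) *ᵥ e := by
  have hSD : Aᵀ * S * D * A =
      Aᵀ * diagonal (fun i => V i ⬝ᵥ V i / (A i ⬝ᵥ V i) * (p i / (A i ⬝ᵥ V i))) * A := by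
    rw [hS, hD, Matrix.mul_assoc Aᵀ, diagonal_mul_diagonal]
  have he : e ⬝ᵥ e = ∑ i, p i * (e ⬝ᵥ e) := by rw [← sum_mul, hps, one_mul]
  rw [sub_mulVec, add_mulVec, dotProduct_sub, dotProduct_add, hSD, hD,
    dotProduct_transpose_mul_diagonal_mul_mulVec, dotProduct_transpose_mul_diagonal_mul_mulVec,
    dotProduct_transpose_mul_diagonal_mul_mulVec, he, ← sum_add_distrib, ← sum_sub_distrib,
    ← sum_sub_distrib]
  refine sum_congr rfl fun i _ => ?_
  simp only [obliqueProj, sub_dotProduct, dotProduct_sub, smul_dotProduct, dotProduct_smul,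
    smul_eq_mul, dotProduct_comm e (V i)]
  ring

theorem sum_mul_dotProduct_self_obliqueProj_le (A V : Matrix m n ℝ) (p : m → ℝ)
    (hps : ∑ i, p i = 1) {D S : Matrix m m ℝ} (hD : D = diagonal fun i => p i / (A i ⬝ᵥ V i))
    (hS : S = diagonal fun i => V i ⬝ᵥ V i / (A i ⬝ᵥ V i)) [DecidableEq n]
    (hM : (Vᵀ * D * A + Aᵀ * D * V - Aᵀ * S * D * A).IsHermitian) (e : n → ℝ) :
    ∑ i, p i * (obliqueProj A V i e ⬝ᵥ obliqueProj A V i e) ≤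
      (1 - ⨅ j, hM.eigenvalues j) * (e ⬝ᵥ e) := by
  rw [sum_mul_dotProduct_self_obliqueProj A V p hps hD hS]
  linarith [hM.iInf_eigenvalues_mul_dotProduct_self_le e]

theorem iInf_eigenvalues_le_one (A V : Matrix m n ℝ) (p : m → ℝ) (hp : ∀ i, 0 ≤ p i)
    (hps : ∑ i, p i = 1) {D S : Matrix m m ℝ} (hD : D = diagonal fun i => p i / (A i ⬝ᵥ V i))
    (hS : S = diagonal fun i => V i ⬝ᵥ V i / (A i ⬝ᵥ V i)) [DecidableEq n]
    (hM : (Vᵀ * D * A + Aᵀ * D * V - Aᵀ * S * D * A).IsHermitian) :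
    ⨅ j, hM.eigenvalues j ≤ 1 := by
  cases isEmpty_or_nonempty n with
  | inl _ => simp [Real.iInf_of_isEmpty]
  | inr hn =>
    obtain ⟨j⟩ := hn
    set e : n → ℝ := Pi.single j 1
    have hpos : 0 < e ⬝ᵥ e := by simp [e]
    have hnonneg : 0 ≤ ∑ i, p i * (obliqueProj A V i e ⬝ᵥ obliqueProj A V i e) :=
      sum_nonneg fun i _ => mul_nonneg (hp i) (dotProduct_star_self_nonneg _)
    nlinarith [sum_mul_dotProduct_self_obliqueProj_le A V p hps hD hS hM e]

end Kaczmarz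

theorem rkmaIter_succ_snoc_sub {m n k : ℕ} (A V : Matrix (Fin m) (Fin n) ℝ)
    (xhat x0 : Fin n → ℝ) (ω : Fin k → Fin m) (i : Fin m) :
    rkmaIter A V (A *ᵥ xhat) x0 (k + 1) (Fin.snoc ω i) - xhat =
      obliqueProj A V i (rkmaIter A V (A *ᵥ xhat) x0 k ω - xhat) := by
  simp only [rkmaIter, Fin.snoc_castSucc, Fin.snoc_last, obliqueProj, dotProduct_sub]
  exact sub_right_comm _ _ _

theorem rkma_linear_convergence_general {m n : ℕ} (A V : Matrix (Fin m) (Fin n) ℝ)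
    (p : Fin m → ℝ) (hp : ∀ i, 0 < p i) (hps : ∑ i, p i = 1)
    (b : Fin m → ℝ) (xhat : Fin n → ℝ) (hb : A.mulVec xhat = b)
    (x0 : Fin n → ℝ)
    (D S : Matrix (Fin m) (Fin m) ℝ)
    (hD : D = Matrix.diagonal (fun i => p i / (A i ⬝ᵥ V i)))
    (hS : S = Matrix.diagonal (fun i => (enorm' (V i)) ^ 2 / (A i ⬝ᵥ V i)))
    (hM : (Vᵀ * D * A + Aᵀ * D * V - Aᵀ * S * D * A).IsHermitian)
    (lam : ℝ) (hlam : lam = ⨅ j, hM.eigenvalues j) :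
    (∀ k : ℕ,
      ∑ ω : Fin (k + 1) → Fin m, (∏ j, p (ω j)) *
          (enorm' (rkmaIter A V b x0 (k + 1) ω - xhat)) ^ 2
        ≤ (1 - lam) *
          ∑ ω : Fin k → Fin m, (∏ j, p (ω j)) *
            (enorm' (rkmaIter A V b x0 k ω - xhat)) ^ 2) ∧
    (∀ k : ℕ,
      ∑ ω : Fin k → Fin m, (∏ j, p (ω j)) *
          (enorm' (rkmaIter A V b x0 k ω - xhat)) ^ 2
        ≤ (1 - lam) ^ k * (enorm' (x0 - xhat)) ^ 2) := by
  subst hb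
  set E : ℕ → ℝ := fun k => ∑ ω : Fin k → Fin m, (∏ j, p (ω j)) *
    enorm' (rkmaIter A V (A *ᵥ xhat) x0 k ω - xhat) ^ 2
  have hS' : S = diagonal fun i => V i ⬝ᵥ V i / (A i ⬝ᵥ V i) := by simpa only [enorm'_sq] using hS
  have hlam_le : lam ≤ 1 := hlam ▸ iInf_eigenvalues_le_one A V p (fun i => (hp i).le) hps hD hS' hM
  have hstep : ∀ k, E (k + 1) ≤ (1 - lam) * E k := fun k =>
    sum_prod_mul_le_mul_sum_of_sum_snoc_le p (fun i => (hp i).le) _ _ _ fun ω => by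
      simpa only [rkmaIter_succ_snoc_sub, enorm'_sq, hlam] using
        sum_mul_dotProduct_self_obliqueProj_le A V p hps hD hS' hM _
  refine ⟨hstep, fun k => ?_⟩
  simpa [E, rkmaIter] using le_geom (sub_nonneg.2 hlam_le) k fun k _ => hstep k

theorem rkma_linear_convergence {m n : ℕ} (A V : Matrix (Fin m) (Fin n) ℝ)
    (p : Fin m → ℝ) (hp : ∀ i, 0 < p i) (hps : ∑ i, p i = 1)
    (hav : ∀ i, 0 < A i ⬝ᵥ V i)
    (b : Fin m → ℝ) (xhat : Fin n → ℝ) (hb : A.mulVec xhat = b)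
    (x0 : Fin n → ℝ)
    (D S : Matrix (Fin m) (Fin m) ℝ)
    (hD : D = Matrix.diagonal (fun i => p i / (A i ⬝ᵥ V i)))
    (hS : S = Matrix.diagonal (fun i => (enorm' (V i)) ^ 2 / (A i ⬝ᵥ V i)))
    (hM : (Vᵀ * D * A + Aᵀ * D * V - Aᵀ * S * D * A).IsHermitian)
    (lam : ℝ) (hlam : lam = ⨅ j, hM.eigenvalues j) (hlampos : 0 < lam) :
    (∀ k : ℕ,
      ∑ ω : Fin (k + 1) → Fin m, (∏ j, p (ω j)) *
          (enorm' (rkmaIter A V b x0 (k + 1) ω - xhat)) ^ 2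
        ≤ (1 - lam) *
          ∑ ω : Fin k → Fin m, (∏ j, p (ω j)) *
            (enorm' (rkmaIter A V b x0 k ω - xhat)) ^ 2) ∧
    (∀ k : ℕ,
      ∑ ω : Fin k → Fin m, (∏ j, p (ω j)) *
          (enorm' (rkmaIter A V b x0 k ω - xhat)) ^ 2
        ≤ (1 - lam) ^ k * (enorm' (x0 - xhat)) ^ 2) :=
  rkma_linear_convergence_general A V p hp hps b xhat hb x0 D S hD hS hM lam hlam
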